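/- arXiv:1701.05223 — 3 statements merged into one kernel-verified Lean document; each statement's English description precedes it below -/
import Mathlib

section
/- Let 0 < β ≤ 1 and x > β^{1/4}. Define θ_u(x) = √((x⁴ − β)/(x²(x² + β))), θ_v(x) = √((x⁴ − β)/(x²(x² + 1))), and y = ρ(x) = √((x + 1/x)(x + β/x)). Then x · θ_u(x) · θ_v(x) = √((y² − β − 1)² − 4β) / y. -/
theorem stmt_2 (β x y : ℝ) (hβ0 : 0 < β) (hβ1 : β ≤ 1)
    (hx : x > β ^ ((1:ℝ)/4))
    (hy : y = Real.sqrt ((x + 1/x) * (x + β/x))) :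
    x * Real.sqrt ((x ^ 4 - β) / (x ^ 2 * (x ^ 2 + β)))
      * Real.sqrt ((x ^ 4 - β) / (x ^ 2 * (x ^ 2 + 1)))
    = Real.sqrt ((y ^ 2 - β - 1) ^ 2 - 4 * β) / y := by
  have hβ4 : (0:ℝ) < β ^ ((1:ℝ)/4) := Real.rpow_pos_of_pos hβ0 _
  have hx0 : 0 < x := lt_trans hβ4 hx
  have hpow : (β ^ ((1:ℝ)/4)) ^ (4:ℕ) = β := by
    rw [← Real.rpow_natCast (β ^ ((1:ℝ)/4)) 4, ← Real.rpow_mul hβ0.le]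
    norm_num
  have hβx : β < x ^ 4 := by
    calc β = (β ^ ((1:ℝ)/4)) ^ (4:ℕ) := hpow.symm
      _ < x ^ 4 := by
        exact pow_lt_pow_left₀ hx hβ4.le (by norm_num)
  have hprod : 0 < (x + 1/x) * (x + β/x) := by positivity
  have hy0 : 0 < y := by rw [hy]; exact Real.sqrt_pos.mpr hprod
  have hy2 : y ^ 2 = (x + 1/x) * (x + β/x) := by
    rw [hy]; exact Real.sq_sqrt hprod.le
  have hA : 0 ≤ (x ^ 4 - β) / (x ^ 2 * (x ^ 2 + β)) := by
    apply div_nonneg (by linarith) (by positivity)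
  have hB : 0 ≤ (x ^ 4 - β) / (x ^ 2 * (x ^ 2 + 1)) := by
    apply div_nonneg (by linarith) (by positivity)
  have hCeq : (y ^ 2 - β - 1) ^ 2 - 4 * β = ((x ^ 4 - β) / x ^ 2) ^ 2 := by
    rw [hy2]; field_simp; ring
  have hC : 0 ≤ (y ^ 2 - β - 1) ^ 2 - 4 * β := by rw [hCeq]; positivity
  have hL : 0 ≤ x * Real.sqrt ((x ^ 4 - β) / (x ^ 2 * (x ^ 2 + β)))
      * Real.sqrt ((x ^ 4 - β) / (x ^ 2 * (x ^ 2 + 1))) := by positivity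
  have hR : 0 ≤ Real.sqrt ((y ^ 2 - β - 1) ^ 2 - 4 * β) / y := by positivity
  have key : (x * Real.sqrt ((x ^ 4 - β) / (x ^ 2 * (x ^ 2 + β)))
      * Real.sqrt ((x ^ 4 - β) / (x ^ 2 * (x ^ 2 + 1)))) ^ 2
      = (Real.sqrt ((y ^ 2 - β - 1) ^ 2 - 4 * β) / y) ^ 2 := by
    rw [mul_pow, mul_pow, Real.sq_sqrt hA, Real.sq_sqrt hB, div_pow,
      Real.sq_sqrt hC, hy2]
    field_simp
    ring
  calc x * Real.sqrt ((x ^ 4 - β) / (x ^ 2 * (x ^ 2 + β)))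
      * Real.sqrt ((x ^ 4 - β) / (x ^ 2 * (x ^ 2 + 1)))
      = Real.sqrt ((x * Real.sqrt ((x ^ 4 - β) / (x ^ 2 * (x ^ 2 + β)))
        * Real.sqrt ((x ^ 4 - β) / (x ^ 2 * (x ^ 2 + 1)))) ^ 2) :=
        (Real.sqrt_sq hL).symm
    _ = Real.sqrt ((Real.sqrt ((y ^ 2 - β - 1) ^ 2 - 4 * β) / y) ^ 2) := by rw [key]
    _ = Real.sqrt ((y ^ 2 - β - 1) ^ 2 - 4 * β) / y := Real.sqrt_sq hR
end

section
/- For 0 < β ≤ 1 define f(w) = √((w² − β₋²)(β₊² − w²)) / (π β w) for w ∈ [β₋, β₊] where β₋ = 1 − √β and β₊ = 1 + √β, and f(w) = 0 otherwise. Then ∫ f(w) dw over [β₋, β₊] equals 1, i.e., f is a probability density function. -/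
open Real MeasureTheory intervalIntegral Set

set_option maxHeartbeats 1000000 in
theorem stmt_6 (β : ℝ) (hβ0 : 0 < β) (hβ1 : β ≤ 1) :
    ∫ w in (1 - Real.sqrt β)..(1 + Real.sqrt β),
      Real.sqrt ((w ^ 2 - (1 - Real.sqrt β) ^ 2) * ((1 + Real.sqrt β) ^ 2 - w ^ 2))
        / (Real.pi * β * w) = 1 := by
  set s : ℝ := Real.sqrt β with hsdef
  have hs0 : 0 < s := Real.sqrt_pos.2 hβ0
  have hss : s ^ 2 = β := Real.sq_sqrt hβ0.le
  have hs1 : s ≤ 1 := by nlinarith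
  set m : ℝ := 1 + β with hm
  set r : ℝ := 2 * s with hr
  set c : ℝ := 1 - β with hc
  have hr0 : 0 < r := by positivity
  have hc0 : 0 ≤ c := by simp [hc]; linarith
  have hmc : m ^ 2 - c ^ 2 = r ^ 2 := by rw [hm, hc, hr]; nlinarith
  have hπ : (0:ℝ) < π := Real.pi_pos
  set F : ℝ → ℝ := fun w =>
    (Real.sqrt (r ^ 2 - (w ^ 2 - m) ^ 2) + m * Real.arcsin ((w ^ 2 - m) / r)
      - c * Real.arcsin ((m * w ^ 2 - c ^ 2) / (r * w ^ 2))) / (2 * π * β) with hF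
  have hab : 1 - s ≤ 1 + s := by linarith
  have ha0 : 0 ≤ 1 - s := by linarith
  -- the integrand rewritten
  have hint : ∀ w : ℝ, Real.sqrt ((w ^ 2 - (1 - s) ^ 2) * ((1 + s) ^ 2 - w ^ 2))
      / (π * β * w) = Real.sqrt (r ^ 2 - (w ^ 2 - m) ^ 2) / (π * β * w) := by
    intro w
    congr 2
    rw [hr, hm, ← hss]; ring
  simp only [hint]
  have hb2 : (1 + s) ^ 2 - m = r := by rw [hm, hr, ← hss]; ring
  have ha2 : (1 - s) ^ 2 - m = -r := by rw [hm, hr, ← hss]; ring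
  -- FTC
  have key : ∫ w in (1 - s)..(1 + s), Real.sqrt (r ^ 2 - (w ^ 2 - m) ^ 2) / (π * β * w)
      = F (1 + s) - F (1 - s) := by
    apply intervalIntegral.integral_eq_sub_of_hasDeriv_right_of_le hab
    · -- continuity
      have cA : Continuous fun w : ℝ => Real.sqrt (r ^ 2 - (w ^ 2 - m) ^ 2) := by
        apply Continuous.sqrt; fun_prop
      have cB : Continuous fun w : ℝ => m * Real.arcsin ((w ^ 2 - m) / r) := by
        have : Continuous fun w : ℝ => (w ^ 2 - m) / r := by fun_prop
        exact continuous_const.mul (Real.continuous_arcsin.comp this)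
      rcases eq_or_lt_of_le hβ1 with hβ | hβ
      · have hcz : c = 0 := by rw [hc, ← hβ]; ring
        simp only [hF, hcz, zero_mul, sub_zero]
        exact ((cA.add cB).div_const _).continuousOn
      · have h1s : 0 < 1 - s := by nlinarith
        apply ContinuousOn.div_const
        apply ContinuousOn.sub ((cA.add cB).continuousOn)
        apply ContinuousOn.mul continuousOn_const
        apply Real.continuous_arcsin.comp_continuousOn
        apply ContinuousOn.div (by fun_prop) (by fun_prop)
        intro w hw
        have : 0 < w := lt_of_lt_of_le h1s hw.1
        positivity
    · -- derivative
      intro x hx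
      apply HasDerivAt.hasDerivWithinAt
      show HasDerivAt F (Real.sqrt (r ^ 2 - (x ^ 2 - m) ^ 2) / (π * β * x)) x
      have hx0 : 0 < x := lt_of_le_of_lt ha0 hx.1
      have hxa : (1 - s) ^ 2 < x ^ 2 := by nlinarith [hx.1, hx.2]
      have hxb : x ^ 2 < (1 + s) ^ 2 := by nlinarith [hx.1, hx.2]
      have hQ : 0 < r ^ 2 - (x ^ 2 - m) ^ 2 := by nlinarith [ha2, hb2]
      have hq0 : 0 < Real.sqrt (r ^ 2 - (x ^ 2 - m) ^ 2) := Real.sqrt_pos.2 hQ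
      have hq2 : Real.sqrt (r ^ 2 - (x ^ 2 - m) ^ 2) ^ 2 = r ^ 2 - (x ^ 2 - m) ^ 2 :=
        Real.sq_sqrt hQ.le
      have p1 : HasDerivAt (fun w : ℝ => w ^ 2) (2 * x) x := by
        simpa using hasDerivAt_pow 2 x
      have d1 : HasDerivAt (fun w : ℝ => Real.sqrt (r ^ 2 - (w ^ 2 - m) ^ 2))
          (-(2 * x * (x ^ 2 - m)) / Real.sqrt (r ^ 2 - (x ^ 2 - m) ^ 2)) x := by
        have h := (((p1.sub_const m).pow 2).const_sub (r ^ 2)).sqrt hQ.ne'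
        refine h.congr_deriv ?_
        simp only [Pi.pow_apply]
        rw [eq_comm, div_eq_div_iff hq0.ne' (by positivity)]
        ring
      have d2 : HasDerivAt (fun w : ℝ => m * Real.arcsin ((w ^ 2 - m) / r))
          (2 * m * x / Real.sqrt (r ^ 2 - (x ^ 2 - m) ^ 2)) x := by
        have hu : HasDerivAt (fun w : ℝ => (w ^ 2 - m) / r) (2 * x / r) x :=
          (p1.sub_const m).div_const r
        have hne1 : (x ^ 2 - m) / r ≠ -1 := by
          intro h; rw [div_eq_iff hr0.ne'] at h; nlinarith
        have hne2 : (x ^ 2 - m) / r ≠ 1 := by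
          intro h; rw [div_eq_iff hr0.ne'] at h; nlinarith
        have hsq : Real.sqrt (1 - ((x ^ 2 - m) / r) ^ 2)
            = Real.sqrt (r ^ 2 - (x ^ 2 - m) ^ 2) / r := by
          rw [show 1 - ((x ^ 2 - m) / r) ^ 2 = (r ^ 2 - (x ^ 2 - m) ^ 2) / r ^ 2 by
            field_simp, Real.sqrt_div hQ.le, Real.sqrt_sq hr0.le]
        have h := ((Real.hasDerivAt_arcsin hne1 hne2).comp x hu).const_mul m
        refine h.congr_deriv ?_
        rw [hsq]
        field_simp
      have d3 : HasDerivAt (fun w : ℝ => c * Real.arcsin ((m * w ^ 2 - c ^ 2) / (r * w ^ 2)))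
          (2 * c ^ 2 / (x * Real.sqrt (r ^ 2 - (x ^ 2 - m) ^ 2))) x := by
        rcases eq_or_lt_of_le hβ1 with hβ | hβ
        · have hcz : c = 0 := by rw [hc, ← hβ]; ring
          simpa [hcz] using hasDerivAt_const x (0 : ℝ)
        · have hcpos : 0 < c := by rw [hc]; linarith
          have hN : HasDerivAt (fun w : ℝ => m * w ^ 2 - c ^ 2) (m * (2 * x)) x :=
            (p1.const_mul m).sub_const (c ^ 2)
          have hD : HasDerivAt (fun w : ℝ => r * w ^ 2) (r * (2 * x)) x := p1.const_mul r
          have hDx : r * x ^ 2 ≠ 0 := by positivity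
          have hv := hN.div hD hDx
          have hid : (r * x ^ 2) ^ 2 - (m * x ^ 2 - c ^ 2) ^ 2
              = c ^ 2 * (r ^ 2 - (x ^ 2 - m) ^ 2) := by
            linear_combination (c ^ 2 - x ^ 4) * hmc
          have hcq : 0 < c ^ 2 * (r ^ 2 - (x ^ 2 - m) ^ 2) := by positivity
          have hlt : (m * x ^ 2 - c ^ 2) ^ 2 < (r * x ^ 2) ^ 2 := by linarith
          have hne1 : (m * x ^ 2 - c ^ 2) / (r * x ^ 2) ≠ -1 := by
            intro h; rw [div_eq_iff hDx] at h; nlinarith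
          have hne2 : (m * x ^ 2 - c ^ 2) / (r * x ^ 2) ≠ 1 := by
            intro h; rw [div_eq_iff hDx, one_mul] at h; rw [h] at hlt
            exact lt_irrefl _ hlt
          have hrx : 0 < r * x ^ 2 := by positivity
          have hsq : Real.sqrt (1 - ((m * x ^ 2 - c ^ 2) / (r * x ^ 2)) ^ 2)
              = c * Real.sqrt (r ^ 2 - (x ^ 2 - m) ^ 2) / (r * x ^ 2) := by
            have e1 : 1 - ((m * x ^ 2 - c ^ 2) / (r * x ^ 2)) ^ 2
                = ((r * x ^ 2) ^ 2 - (m * x ^ 2 - c ^ 2) ^ 2) / (r * x ^ 2) ^ 2 := by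
              field_simp
            rw [e1, hid, show c ^ 2 * (r ^ 2 - (x ^ 2 - m) ^ 2)
                = (c * Real.sqrt (r ^ 2 - (x ^ 2 - m) ^ 2)) ^ 2 by
                rw [mul_pow c (Real.sqrt (r ^ 2 - (x ^ 2 - m) ^ 2)) 2, hq2],
              Real.sqrt_div (sq_nonneg _), Real.sqrt_sq (by positivity),
              Real.sqrt_sq hrx.le]
          have h := ((Real.hasDerivAt_arcsin hne1 hne2).comp x hv).const_mul c
          refine h.congr_deriv ?_
          rw [hsq]
          field_simp
          ring
      have hq2e : Real.sqrt (r ^ 2 - (x ^ 2 - m) ^ 2) ^ 2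
          = 4 * s ^ 2 - (x ^ 2 - 1 - β) ^ 2 := by rw [hq2, hr, hm]; ring
      have comb := ((d1.add d2).sub d3).div_const (2 * π * β)
      refine comb.congr_deriv ?_
      have e : -(2 * x * (x ^ 2 - m)) / Real.sqrt (r ^ 2 - (x ^ 2 - m) ^ 2)
          + 2 * m * x / Real.sqrt (r ^ 2 - (x ^ 2 - m) ^ 2)
          - 2 * c ^ 2 / (x * Real.sqrt (r ^ 2 - (x ^ 2 - m) ^ 2))
          = 2 * Real.sqrt (r ^ 2 - (x ^ 2 - m) ^ 2) / x := by
        field_simp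
        linear_combination hmc - hq2
      rw [e]
      field_simp
    · -- integrable
      rcases eq_or_lt_of_le hβ1 with hβ | hβ
      · -- β = 1
        have hsone : s = 1 := by rw [hsdef, hβ, Real.sqrt_one]
        rw [intervalIntegrable_iff_integrableOn_Ioc_of_le hab]
        have hcont : Continuous fun w : ℝ => Real.sqrt ((1 + s) ^ 2 - w ^ 2) / (π * β) :=
          (Continuous.sqrt (by fun_prop)).div_const _
        apply (hcont.integrableOn_Ioc).congr_fun ?_ measurableSet_Ioc
        intro w hw
        have hw0 : 0 < w := by
          have := hw.1; rw [hsone] at this; linarith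
        have h4 : r ^ 2 - (w ^ 2 - m) ^ 2 = w ^ 2 * ((1 + s) ^ 2 - w ^ 2) := by
          rw [hr, hm, hsone, hβ]; ring
        simp only [h4, Real.sqrt_mul (sq_nonneg w), Real.sqrt_sq hw0.le]
        field_simp
      · -- β < 1
        have h1s : 0 < 1 - s := by nlinarith
        apply ContinuousOn.intervalIntegrable
        apply ContinuousOn.div
        · exact (Continuous.sqrt (by fun_prop)).continuousOn
        · fun_prop
        · intro w hw
          rw [uIcc_of_le hab] at hw
          have : 0 < w := lt_of_lt_of_le h1s hw.1
          positivity
  rw [key]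
  have hFb : F (1 + s) = (m * (π/2) - c * (π/2)) / (2 * π * β) := by
    rw [hF]
    have h1 : r ^ 2 - ((1+s) ^ 2 - m) ^ 2 = 0 := by rw [hb2]; ring
    have h2 : ((1+s) ^ 2 - m) / r = 1 := by rw [hb2]; field_simp
    have h3 : (m * (1+s) ^ 2 - c ^ 2) / (r * (1+s) ^ 2) = 1 := by
      rw [div_eq_one_iff_eq (by positivity), hm, hc, hr, ← hss]; ring
    simp [h1, h2, h3, Real.arcsin_one]
  have hFa : F (1 - s) = (m * (-(π/2)) - c * (-(π/2))) / (2 * π * β) := by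
    rw [hF]
    have h1 : r ^ 2 - ((1-s) ^ 2 - m) ^ 2 = 0 := by rw [ha2]; ring
    have h2 : ((1-s) ^ 2 - m) / r = -1 := by rw [ha2]; field_simp
    simp only [h1, h2]
    rcases eq_or_lt_of_le hβ1 with hβ | hβ
    · have hcz : c = 0 := by rw [hc, ← hβ]; ring
      simp [hcz, Real.arcsin_neg_one]
    · have h3 : (m * (1-s) ^ 2 - c ^ 2) / (r * (1-s) ^ 2) = -1 := by
        have h1s : 0 < 1 - s := by nlinarith
        rw [div_eq_iff (by positivity), hm, hc, hr, ← hss]; ring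
      rw [h3]
      simp [Real.arcsin_neg_one]
  rw [hFb, hFa]
  rw [hm, hc]
  field_simp
  ring
end

section
/- For 0 < β ≤ 1 and x > β^{1/4}, the minimal asymptotic per-spike loss x²(1 − θ_u(x)²θ_v(x)²), with θ_u(x)² = (x⁴−β)/(x²(x²+β)) and θ_v(x)² = (x⁴−β)/(x²(x²+1)), equals x² − ((x⁴−β)²)/(x²(x²+β)(x²+1)), which is strictly positive and converges to 1 + β as x → ∞. -/
theorem stmt_19 (β : ℝ) (hβ0 : 0 < β) (hβ1 : β ≤ 1) :
    (∀ x : ℝ, x > β ^ ((1:ℝ)/4) →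
      x ^ 2 * (1 - ((x ^ 4 - β) / (x ^ 2 * (x ^ 2 + β)))
                    * ((x ^ 4 - β) / (x ^ 2 * (x ^ 2 + 1))))
        = x ^ 2 - (x ^ 4 - β) ^ 2 / (x ^ 2 * (x ^ 2 + β) * (x ^ 2 + 1)) ∧
      0 < x ^ 2 - (x ^ 4 - β) ^ 2 / (x ^ 2 * (x ^ 2 + β) * (x ^ 2 + 1))) ∧
    Filter.Tendsto
      (fun x : ℝ => x ^ 2 - (x ^ 4 - β) ^ 2 / (x ^ 2 * (x ^ 2 + β) * (x ^ 2 + 1)))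
      Filter.atTop (nhds (1 + β)) := by
  constructor
  · intro x hx
    have hb4 : (0:ℝ) < β ^ ((1:ℝ)/4) := Real.rpow_pos_of_pos hβ0 _
    have hx0 : 0 < x := lt_trans hb4 hx
    have hx4 : β < x ^ 4 := by
      have h1 : (β ^ ((1:ℝ)/4)) ^ (4:ℕ) = β := by
        rw [← Real.rpow_natCast (β ^ ((1:ℝ)/4)) 4, ← Real.rpow_mul hβ0.le]
        norm_num
      have h2 : (β ^ ((1:ℝ)/4)) ^ (4:ℕ) < x ^ (4:ℕ) :=
        pow_lt_pow_left₀ hx hb4.le (by norm_num)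
      rwa [h1] at h2
    have hx2 : (0:ℝ) < x ^ 2 := by positivity
    have hxb : (0:ℝ) < x ^ 2 + β := by positivity
    have hx1 : (0:ℝ) < x ^ 2 + 1 := by positivity
    constructor
    · field_simp
    · rw [sub_pos, div_lt_iff₀ (by positivity)]
      nlinarith [sq_nonneg x, sq_nonneg (x^2), pow_pos hx0 6, pow_pos hx0 4]
  · have key : ∀ᶠ x : ℝ in Filter.atTop,
        x ^ 2 - (x ^ 4 - β) ^ 2 / (x ^ 2 * (x ^ 2 + β) * (x ^ 2 + 1))
          = ((1 + β) + 3 * β / x ^ 2 - β ^ 2 / x ^ 6)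
            / (1 + (1 + β) / x ^ 2 + β / x ^ 4) := by
      filter_upwards [Filter.eventually_ge_atTop (1:ℝ)] with x hx
      have hx0 : (0:ℝ) < x := lt_of_lt_of_le one_pos hx
      have h1 : x ^ 2 + β ≠ 0 := by positivity
      have h2 : x ^ 2 + 1 ≠ 0 := by positivity
      have h3 : (1:ℝ) + (1 + β) / x ^ 2 + β / x ^ 4 ≠ 0 := by positivity
      field_simp
      ring
    rw [Filter.tendsto_congr' key]
    have h2 : Filter.Tendsto (fun x : ℝ => x ^ 2) Filter.atTop Filter.atTop :=
      Filter.tendsto_pow_atTop (by norm_num)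
    have h4 : Filter.Tendsto (fun x : ℝ => x ^ 4) Filter.atTop Filter.atTop :=
      Filter.tendsto_pow_atTop (by norm_num)
    have h6 : Filter.Tendsto (fun x : ℝ => x ^ 6) Filter.atTop Filter.atTop :=
      Filter.tendsto_pow_atTop (by norm_num)
    have t1 : Filter.Tendsto (fun x : ℝ => 3 * β / x ^ 2) Filter.atTop (nhds 0) :=
      Filter.Tendsto.div_atTop tendsto_const_nhds h2
    have t2 : Filter.Tendsto (fun x : ℝ => β ^ 2 / x ^ 6) Filter.atTop (nhds 0) :=
      Filter.Tendsto.div_atTop tendsto_const_nhds h6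
    have t3 : Filter.Tendsto (fun x : ℝ => (1 + β) / x ^ 2) Filter.atTop (nhds 0) :=
      Filter.Tendsto.div_atTop tendsto_const_nhds h2
    have t4 : Filter.Tendsto (fun x : ℝ => β / x ^ 4) Filter.atTop (nhds 0) :=
      Filter.Tendsto.div_atTop tendsto_const_nhds h4
    have num : Filter.Tendsto (fun x : ℝ => (1 + β) + 3 * β / x ^ 2 - β ^ 2 / x ^ 6)
        Filter.atTop (nhds (1 + β)) := by
      have h := ((tendsto_const_nhds : Filter.Tendsto (fun _ : ℝ => (1 + β))
        Filter.atTop (nhds (1 + β))).add t1).sub t2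
      simpa using h
    have den : Filter.Tendsto (fun x : ℝ => 1 + (1 + β) / x ^ 2 + β / x ^ 4)
        Filter.atTop (nhds 1) := by
      have h := ((tendsto_const_nhds : Filter.Tendsto (fun _ : ℝ => (1:ℝ))
        Filter.atTop (nhds 1)).add t3).add t4
      simpa using h
    have := num.div den (by norm_num)
    rw [div_one] at this
    exact this
end
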